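/- For every integer n ≥ 1, every m ∈ {1,...,n} and every K > 0, the normalized dual edge Boltzmann factor on the Nishimori line satisfies u_m^*(K) = (tanh K)^{m+1} if m is odd and u_m^*(K) = (tanh K)^m if m is even. -/

import Mathlib

/-!
Since `exp ((n - 2k) a) = exp (n a) * exp (-2a) ^ k`, the generating polynomial
`(1 - t) ^ m * (1 + t) ^ (n - m)` of the `D_m^k` evaluates `Σ_k D_m^k x_k(K)` to
`(p + (1 - p) (-1) ^ m) (2 sinh K) ^ m (2 cosh K) ^ (n - m)`. Dividing by the value at `m = 0`
leaves `(p + (1 - p) (-1) ^ m) tanh K ^ m`, and on the Nishimori line `2p - 1 = tanh K`.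
-/

open Real Finset

/-- Nishimori-line probability `p = e^K / (e^K + e^{-K})`. -/
noncomputable def nlProb (K : ℝ) : ℝ := exp K / (exp K + exp (-K))

/-- The averaged edge Boltzmann factor
`x_k(K) = p e^{(n-2k)K} + (1-p) e^{-(n-2k)K}` on the Nishimori line. -/
noncomputable def edgeBoltzmann (n k : ℕ) (K : ℝ) : ℝ :=
  nlProb K * exp (((n : ℝ) - 2 * k) * K) +
    (1 - nlProb K) * exp (-(((n : ℝ) - 2 * k) * K))

/-- `D_m^k` : the coefficient of `t^k` in the polynomial `(1-t)^m (1+t)^{n-m}`. -/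
noncomputable def dualCoeff (n m k : ℕ) : ℝ :=
  (((1 - Polynomial.X) ^ m * (1 + Polynomial.X) ^ (n - m) : Polynomial ℝ)).coeff k

/-- The dual edge Boltzmann factor `x_m^*(K) = 2^{-n/2} Σ_{k=0}^n D_m^k x_k(K)`. -/
noncomputable def dualEdgeBoltzmann (n m : ℕ) (K : ℝ) : ℝ :=
  (2 : ℝ) ^ (-(n : ℝ) / 2) * ∑ k ∈ range (n + 1), dualCoeff n m k * edgeBoltzmann n k K

/-- The normalized dual edge Boltzmann factor `u_m^*(K) = x_m^*(K) / x_0^*(K)`. -/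
noncomputable def normDualEdgeBoltzmann (n m : ℕ) (K : ℝ) : ℝ :=
  dualEdgeBoltzmann n m K / dualEdgeBoltzmann n 0 K

theorem sum_dualCoeff_mul_pow {n m : ℕ} (hmn : m ≤ n) (t : ℝ) :
    ∑ k ∈ range (n + 1), dualCoeff n m k * t ^ k = (1 - t) ^ m * (1 + t) ^ (n - m) := by
  have hdeg : ((1 - Polynomial.X) ^ m * (1 + Polynomial.X) ^ (n - m) :
      Polynomial ℝ).natDegree < n + 1 := by
    apply Nat.lt_succ_of_le
    compute_degree
    omega
  simpa [dualCoeff] using (Polynomial.eval_eq_sum_range' hdeg t).symm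

theorem exp_mul_one_sub_exp_neg_two_mul (a : ℝ) : exp a * (1 - exp (-2 * a)) = 2 * sinh a := by
  rw [sinh_eq, mul_sub, ← exp_add]; ring_nf

theorem exp_mul_one_add_exp_neg_two_mul (a : ℝ) : exp a * (1 + exp (-2 * a)) = 2 * cosh a := by
  rw [cosh_eq, mul_add, ← exp_add]; ring_nf

theorem sum_dualCoeff_mul_exp {n m : ℕ} (hmn : m ≤ n) (a : ℝ) :
    ∑ k ∈ range (n + 1), dualCoeff n m k * exp (((n : ℝ) - 2 * k) * a)
      = (2 * sinh a) ^ m * (2 * cosh a) ^ (n - m) := by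
  have hexp (k : ℕ) : exp (((n : ℝ) - 2 * k) * a) = exp a ^ n * exp (-2 * a) ^ k := by
    rw [← exp_nat_mul, ← exp_nat_mul, ← exp_add]; ring_nf
  have hsplit : exp a ^ n = exp a ^ m * exp a ^ (n - m) := by
    rw [← pow_add, Nat.add_sub_cancel' hmn]
  simp_rw [hexp, mul_left_comm _ (exp a ^ n), ← mul_sum, sum_dualCoeff_mul_pow hmn, hsplit,
    ← exp_mul_one_sub_exp_neg_two_mul, ← exp_mul_one_add_exp_neg_two_mul, mul_pow]
  ring

theorem sum_dualCoeff_mul_edgeBoltzmann {n m : ℕ} (hmn : m ≤ n) (K : ℝ) :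
    ∑ k ∈ range (n + 1), dualCoeff n m k * edgeBoltzmann n k K
      = (nlProb K + (1 - nlProb K) * (-1) ^ m) * (2 * sinh K) ^ m * (2 * cosh K) ^ (n - m) := by
  have hsum := sum_dualCoeff_mul_exp hmn K
  have hsum_neg := sum_dualCoeff_mul_exp hmn (-K)
  simp only [mul_neg, sinh_neg, cosh_neg, neg_pow (2 * sinh K)] at hsum_neg
  simp only [edgeBoltzmann, mul_add, sum_add_distrib, mul_left_comm _ (nlProb K),
    mul_left_comm _ (1 - nlProb K), ← mul_sum, hsum, hsum_neg]
  ring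

theorem two_mul_nlProb_sub_one (K : ℝ) : 2 * nlProb K - 1 = tanh K := by
  have hc : exp K + exp (-K) ≠ 0 := by positivity
  rw [nlProb, tanh_eq_sinh_div_cosh, sinh_eq, cosh_eq]
  field_simp
  ring

theorem normDualEdgeBoltzmann_eq_mul_tanh_pow {n m : ℕ} (hmn : m ≤ n) (K : ℝ) :
    normDualEdgeBoltzmann n m K = (nlProb K + (1 - nlProb K) * (-1) ^ m) * tanh K ^ m := by
  have hcosh : cosh K ≠ 0 := (cosh_pos K).ne'
  have hsplit : (2 * cosh K) ^ n = (2 * cosh K) ^ m * (2 * cosh K) ^ (n - m) := by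
    rw [← pow_add, Nat.add_sub_cancel' hmn]
  rw [normDualEdgeBoltzmann, dualEdgeBoltzmann, dualEdgeBoltzmann,
    sum_dualCoeff_mul_edgeBoltzmann hmn, sum_dualCoeff_mul_edgeBoltzmann n.zero_le,
    mul_div_mul_left _ _ (by positivity), tanh_eq_sinh_div_cosh, div_pow, Nat.sub_zero, hsplit]
  field_simp
  ring

theorem normDualEdgeBoltzmann_eq_general (n : ℕ) (m : ℕ) (hmn : m ≤ n)
    (K : ℝ) :
    normDualEdgeBoltzmann n m K =
      if Odd m then (tanh K) ^ (m + 1) else (tanh K) ^ m := by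
  rw [normDualEdgeBoltzmann_eq_mul_tanh_pow hmn]
  split_ifs with hm
  · rw [hm.neg_one_pow, pow_succ', ← two_mul_nlProb_sub_one]
    ring
  · rw [(Nat.not_odd_iff_even.mp hm).neg_one_pow]
    ring

/-- For every `n ≥ 1`, `m ∈ {1,…,n}` and `K > 0`, the normalized dual edge
Boltzmann factor satisfies `u_m^*(K) = (tanh K)^{m+1}` if `m` is odd and
`u_m^*(K) = (tanh K)^m` if `m` is even. -/
theorem normDualEdgeBoltzmann_eq (n : ℕ) (hn : 1 ≤ n) (m : ℕ) (hm1 : 1 ≤ m) (hmn : m ≤ n)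
    (K : ℝ) (hK : 0 < K) :
    normDualEdgeBoltzmann n m K =
      if Odd m then (tanh K) ^ (m + 1) else (tanh K) ^ m :=
  normDualEdgeBoltzmann_eq_general n m hmn K
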